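/- arXiv:1001.3252 — 3 statements merged into one kernel-verified Lean document; each statement's English description precedes it below -/
import Mathlib

section
/- (Uniform Exterior Sphere property of 𝒟_{ij} on 𝒜_g^σ.) Let n ≥ 2 be an integer, σ > 0, 0 < r_- < r_+, and i ≠ j indices in {1,…,n}. Set α = r_-√(2+2σ²). Then for every 𝐱 ∈ 𝒜_g^σ with |x_i−x_j| = σ(x̌_i+x̌_j), the open ball of radius α centered at 𝐱 − α·𝐧_{ij}(𝐱) in (ℝ³×ℝ)^n is disjoint from 𝒟_{ij}. -/
open scoped RealInnerProductSpace

noncomputable section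

/-- A globule: a point of `ℝ³ × ℝ` with the Euclidean (L²) norm;
the first component is the center, the second the radius. -/
abbrev Glob : Type := WithLp 2 (EuclideanSpace ℝ (Fin 3) × ℝ)

/-- The configuration space of `n` globules, `(ℝ³ × ℝ)ⁿ` with the Euclidean norm. -/
abbrev Conf (n : ℕ) : Type := PiLp 2 (fun _ : Fin n => Glob)

/-- The center of the `i`-th globule. -/
def ctr {n : ℕ} (x : Conf n) (i : Fin n) : EuclideanSpace ℝ (Fin 3) :=
  (WithLp.equiv 2 (EuclideanSpace ℝ (Fin 3) × ℝ) (x i)).1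

/-- The radius of the `i`-th globule. -/
def rad {n : ℕ} (x : Conf n) (i : Fin n) : ℝ :=
  (WithLp.equiv 2 (EuclideanSpace ℝ (Fin 3) × ℝ) (x i)).2

/-- The vector `𝐰` at a configuration `x`: its `i`-th center component is
`(x_i - x_j)/(σ(x̌_i + x̌_j))`, its `j`-th center component is the opposite,
its radius components at `i` and `j` are `-σ`, all other components vanish. -/
def wvec (σ : ℝ) {n : ℕ} (i j : Fin n) (x : Conf n) : Conf n := WithLp.toLp 2 fun k =>
  (WithLp.equiv 2 (EuclideanSpace ℝ (Fin 3) × ℝ)).symm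
    (if k = i then (σ * (rad x i + rad x j))⁻¹ • (ctr x i - ctr x j)
      else if k = j then (σ * (rad x i + rad x j))⁻¹ • (ctr x j - ctr x i)
      else 0,
     if k = i ∨ k = j then -σ else 0)

/-- The inward normal vector `𝐧_{ij}(x) = 𝐰/√(2+2σ²)`. -/
def nvec (σ : ℝ) {n : ℕ} (i j : Fin n) (x : Conf n) : Conf n :=
  (Real.sqrt (2 + 2 * σ ^ 2))⁻¹ • wvec σ i j x

/-- The set `𝒟_{ij} = {𝐱 : |x_i - x_j| ≥ σ(x̌_i + x̌_j)}`. -/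
def Dset (σ : ℝ) {n : ℕ} (i j : Fin n) : Set (Conf n) :=
  {x | σ * (rad x i + rad x j) ≤ ‖ctr x i - ctr x j‖}

/-- The set `𝒜_g^σ` of allowed (rescaled) configurations. -/
def AgSet (σ rm rp : ℝ) (n : ℕ) : Set (Conf n) :=
  {x | (∀ i, rm / σ ≤ rad x i ∧ rad x i ≤ rp / σ) ∧
    ∀ i j : Fin n, i ≠ j → σ * (rad x i + rad x j) ≤ ‖ctr x i - ctr x j‖}

/-- The function `f(𝐱) = |x_i - x_j| - σ(x̌_i + x̌_j)`. -/
def fij (σ : ℝ) {n : ℕ} (i j : Fin n) (x : Conf n) : ℝ :=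
  ‖ctr x i - ctr x j‖ - σ * (rad x i + rad x j)

end

/-!
The function `fij σ i j` grows at most like `√(2 + 2σ²)` times the distance: perturbing a
configuration by `z` raises it by at most `‖ctr z i‖ + ‖ctr z j‖ - σ (rad z i + rad z j)`, which
Cauchy–Schwarz bounds by `√(2 + 2σ²) ‖z‖`. The centre of the ball is `x - rm • 𝐰`; there the two
centers are `2 rm` closer and the radius sum is `2 rm σ` larger than at `x`, so `fij` drops from `0`
to `-rm (2 + 2σ²)`. Within distance `α = rm √(2 + 2σ²)` of that centre `fij` therefore stays negative,
i.e. outside `𝒟_{ij}`.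
-/

section Components

variable {n : ℕ}

@[simp] lemma ctr_add (a b : Conf n) (k : Fin n) : ctr (a + b) k = ctr a k + ctr b k := rfl

@[simp] lemma ctr_sub (a b : Conf n) (k : Fin n) : ctr (a - b) k = ctr a k - ctr b k := rfl

@[simp] lemma ctr_smul (r : ℝ) (a : Conf n) (k : Fin n) : ctr (r • a) k = r • ctr a k := rfl

@[simp] lemma rad_add (a b : Conf n) (k : Fin n) : rad (a + b) k = rad a k + rad b k := rfl

@[simp] lemma rad_sub (a b : Conf n) (k : Fin n) : rad (a - b) k = rad a k - rad b k := rfl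

@[simp] lemma rad_smul (r : ℝ) (a : Conf n) (k : Fin n) : rad (r • a) k = r * rad a k := rfl

lemma norm_sq_apply_eq (z : Conf n) (k : Fin n) :
    ‖z k‖ ^ 2 = ‖ctr z k‖ ^ 2 + rad z k ^ 2 := by
  rw [WithLp.prod_norm_sq_eq_of_L2]
  simp [ctr, rad]

lemma norm_sq_apply_add_norm_sq_apply_le {i j : Fin n} (hij : i ≠ j) (z : Conf n) :
    ‖z i‖ ^ 2 + ‖z j‖ ^ 2 ≤ ‖z‖ ^ 2 := by
  rw [PiLp.norm_sq_eq_of_L2, ← Finset.sum_pair (f := fun k ↦ ‖z k‖ ^ 2) hij]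
  exact Finset.sum_le_sum_of_subset_of_nonneg (Finset.subset_univ _) fun k _ _ ↦ by positivity

end Components

lemma add_add_mul_add_le_sqrt_mul_sqrt (a b c d σ : ℝ) :
    a + b + σ * (c + d) ≤ √(2 + 2 * σ ^ 2) * √(a ^ 2 + b ^ 2 + c ^ 2 + d ^ 2) := by
  rw [← Real.sqrt_mul (by positivity)]
  refine (le_abs_self _).trans (Real.abs_le_sqrt ?_)
  nlinarith [sq_nonneg (a - b), sq_nonneg (c - σ * a), sq_nonneg (d - σ * a),
    sq_nonneg (c - σ * b), sq_nonneg (d - σ * b), sq_nonneg (σ * c - σ * d)]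

section Fij

variable {n : ℕ} (σ : ℝ) {i j : Fin n}

lemma fij_add_le (hij : i ≠ j) (c z : Conf n) :
    fij σ i j (c + z) ≤ fij σ i j c + √(2 + 2 * σ ^ 2) * ‖z‖ := by
  have hctr : ‖ctr (c + z) i - ctr (c + z) j‖ ≤ ‖ctr c i - ctr c j‖ + (‖ctr z i‖ + ‖ctr z j‖) := by
    rw [ctr_add, ctr_add, add_sub_add_comm]
    exact (norm_add_le _ _).trans (add_le_add_right (norm_sub_le _ _) _)
  have hcs := add_add_mul_add_le_sqrt_mul_sqrt ‖ctr z i‖ ‖ctr z j‖ (-rad z i) (-rad z j) σ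
  have hz : √(‖ctr z i‖ ^ 2 + ‖ctr z j‖ ^ 2 + (-rad z i) ^ 2 + (-rad z j) ^ 2) ≤ ‖z‖ := by
    rw [Real.sqrt_le_left (norm_nonneg z), neg_sq, neg_sq]
    linarith [norm_sq_apply_eq z i, norm_sq_apply_eq z j,
      norm_sq_apply_add_norm_sq_apply_le hij z]
  have := mul_le_mul_of_nonneg_left hz (Real.sqrt_nonneg (2 + 2 * σ ^ 2))
  rw [fij, fij, rad_add, rad_add]
  linarith

lemma ctr_wvec_left (x : Conf n) :
    ctr (wvec σ i j x) i = (σ * (rad x i + rad x j))⁻¹ • (ctr x i - ctr x j) := by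
  simp [ctr, wvec]

lemma ctr_wvec_right (hij : i ≠ j) (x : Conf n) :
    ctr (wvec σ i j x) j = (σ * (rad x i + rad x j))⁻¹ • (ctr x j - ctr x i) := by
  simp [ctr, wvec, hij.symm]

lemma rad_wvec_left (x : Conf n) : rad (wvec σ i j x) i = -σ := by
  simp [rad, wvec]

lemma rad_wvec_right (x : Conf n) : rad (wvec σ i j x) j = -σ := by
  simp [rad, wvec]

lemma smul_nvec (r : ℝ) (x : Conf n) :
    (r * √(2 + 2 * σ ^ 2)) • nvec σ i j x = r • wvec σ i j x := by
  have : √(2 + 2 * σ ^ 2) ≠ 0 := (Real.sqrt_pos.mpr (by positivity)).ne'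
  rw [nvec, smul_smul, mul_assoc, mul_inv_cancel₀ this, mul_one]

lemma fij_sub_smul_wvec (hij : i ≠ j) {x : Conf n} {r : ℝ}
    (hs : 0 < σ * (rad x i + rad x j)) (h2r : 2 * r ≤ σ * (rad x i + rad x j))
    (hc : ‖ctr x i - ctr x j‖ = σ * (rad x i + rad x j)) :
    fij σ i j (x - r • wvec σ i j x) = -(r * (2 + 2 * σ ^ 2)) := by
  set s := σ * (rad x i + rad x j)
  have hctr : ctr (x - r • wvec σ i j x) i - ctr (x - r • wvec σ i j x) j =
      (1 - 2 * r / s) • (ctr x i - ctr x j) := by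
    rw [ctr_sub, ctr_sub, ctr_smul, ctr_smul, ctr_wvec_left, ctr_wvec_right σ hij, div_eq_mul_inv]
    module
  have hrad : rad (x - r • wvec σ i j x) i + rad (x - r • wvec σ i j x) j =
      rad x i + rad x j + 2 * r * σ := by
    rw [rad_sub, rad_sub, rad_smul, rad_smul, rad_wvec_left, rad_wvec_right]
    ring
  have h1 : 0 ≤ 1 - 2 * r / s := by
    rw [sub_nonneg, div_le_one hs]; exact h2r
  rw [fij, hctr, hrad, norm_smul, hc, Real.norm_eq_abs, abs_of_nonneg h1]
  field_simp
  ring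

end Fij

lemma two_mul_le_of_mem_AgSet {n : ℕ} {σ rm rp : ℝ} (hσ : 0 < σ) {x : Conf n}
    (hx : x ∈ AgSet σ rm rp n) (i j : Fin n) : 2 * rm ≤ σ * (rad x i + rad x j) := by
  calc 2 * rm = σ * (rm / σ + rm / σ) := by field_simp; ring
    _ ≤ σ * (rad x i + rad x j) := by gcongr; exacts [(hx.1 i).1, (hx.1 j).1]

theorem statement2_general (n : ℕ) (σ : ℝ) (hσ : 0 < σ) (rm rp : ℝ)
    (hrm : 0 < rm) (i j : Fin n) (hij : i ≠ j)
    (x : Conf n) (hx : x ∈ AgSet σ rm rp n)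
    (hc : ‖ctr x i - ctr x j‖ = σ * (rad x i + rad x j)) :
    Metric.ball (x - (rm * Real.sqrt (2 + 2 * σ ^ 2)) • nvec σ i j x)
        (rm * Real.sqrt (2 + 2 * σ ^ 2)) ∩ Dset σ i j = ∅ := by
  rw [smul_nvec]
  set c := x - rm • wvec σ i j x
  have h2rm := two_mul_le_of_mem_AgSet hσ hx i j
  have hfc : fij σ i j c = -(rm * (2 + 2 * σ ^ 2)) :=
    fij_sub_smul_wvec σ hij (by linarith) h2rm hc
  rw [Set.eq_empty_iff_forall_notMem]
  rintro y ⟨hy, hyD⟩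
  rw [Metric.mem_ball, dist_eq_norm] at hy
  have hfy := fij_add_le σ hij c (y - c)
  rw [add_sub_cancel, hfc] at hfy
  have ht : (0 : ℝ) < 2 + 2 * σ ^ 2 := by positivity
  have hlt : √(2 + 2 * σ ^ 2) * ‖y - c‖ < rm * (2 + 2 * σ ^ 2) :=
    calc _ < √(2 + 2 * σ ^ 2) * (rm * √(2 + 2 * σ ^ 2)) :=
          mul_lt_mul_of_pos_left hy (Real.sqrt_pos.mpr ht)
      _ = rm * (2 + 2 * σ ^ 2) := by rw [mul_left_comm, Real.mul_self_sqrt ht.le]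
  have hfy_nonneg : 0 ≤ fij σ i j y := sub_nonneg.mpr hyD
  linarith

theorem statement2 (n : ℕ) (hn : 2 ≤ n) (σ : ℝ) (hσ : 0 < σ) (rm rp : ℝ)
    (hrm : 0 < rm) (hrmp : rm < rp) (i j : Fin n) (hij : i ≠ j)
    (x : Conf n) (hx : x ∈ AgSet σ rm rp n)
    (hc : ‖ctr x i - ctr x j‖ = σ * (rad x i + rad x j)) :
    Metric.ball (x - (rm * Real.sqrt (2 + 2 * σ ^ 2)) • nvec σ i j x)
        (rm * Real.sqrt (2 + 2 * σ ^ 2)) ∩ Dset σ i j = ∅ :=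
  statement2_general n σ hσ rm rp hrm i j hij x hx hc
end

section
/- (Compatibility between the boundaries.) Let n ≥ 2 be an integer, σ > 0, 0 < r_- < r_+, and set β₀ = r_- / (4 r_+ max(σ,1) n^{3/2}). For every 𝐱 ∈ 𝒜_g^σ such that at least one constraint is active (i.e. |x_i−x_j| = σ(x̌_i+x̌_j) for some i ≠ j, or x̌_i = r_+/σ for some i, or x̌_i = r_- /σ for some i), there exists a nonzero vector 𝐯 ∈ (ℝ³×ℝ)^n such that: (a) for every pair i ≠ j with |x_i−x_j| = σ(x̌_i+x̌_j), ⟨𝐯, 𝐧_{ij}(𝐱)⟩ ≥ β₀‖𝐯‖; (b) for every i with x̌_i = r_+/σ, −v̌_i ≥ β₀‖𝐯‖; (c) for every i with x̌_i = r_- /σ, v̌_i ≥ β₀‖𝐯‖. -/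
/-!
Call two globules in contact when their constraint `𝒟_{ij}` is active, and fix one globule in
each connected component of the contact graph. Moving every center away from the fixed globule
of its component separates touching globules at relative velocity `x_i - x_j`, which gains
`σ(x̌_i + x̌_j) ≥ 2r₋` against `𝐰`; moving every radius towards the middle of `[r₋/σ, r₊/σ]`,
at speed `δ = r₋/(2 max(σ,1))` at the two ends, satisfies the radius constraints and costs the
contact constraints at most `2σδ`. As a component is spanned by paths of at most `n - 1` contacts,
each of length at most `2r₊`, the vector has norm at most `2r₊n^{3/2}`, whence `β₀`.
-/

open scoped RealInnerProductSpace

namespace SimpleGraph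

variable {V E : Type*} [SeminormedAddCommGroup E] {G : SimpleGraph V} {f : V → E} {L : ℝ}

theorem Walk.norm_sub_le_mul_length (hf : ∀ a b, G.Adj a b → ‖f a - f b‖ ≤ L) {u v : V}
    (p : G.Walk u v) : ‖f u - f v‖ ≤ L * p.length := by
  induction p with
  | nil => simp
  | @cons u w v hadj p ih =>
    calc ‖f u - f v‖ ≤ ‖f u - f w‖ + ‖f w - f v‖ := norm_sub_le_norm_sub_add_norm_sub _ _ _
      _ ≤ L + L * p.length := add_le_add (hf u w hadj) ih
      _ = L * (p.cons hadj).length := by rw [Walk.length_cons]; push_cast; ring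

theorem Reachable.norm_sub_le_mul_card_sub_one [Fintype V]
    (hf : ∀ a b, G.Adj a b → ‖f a - f b‖ ≤ L) (hL : 0 ≤ L) {u v : V}
    (h : G.Reachable u v) : ‖f u - f v‖ ≤ L * (Fintype.card V - 1) := by
  obtain ⟨p, hp⟩ := h.exists_isPath
  have hlen : (p.length : ℝ) ≤ Fintype.card V - 1 := by
    rw [le_sub_iff_add_le]
    exact_mod_cast hp.length_lt
  calc ‖f u - f v‖ ≤ L * p.length := p.norm_sub_le_mul_length hf
    _ ≤ L * (Fintype.card V - 1) := mul_le_mul_of_nonneg_left hlen hL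

end SimpleGraph

theorem PiLp.norm_le_sqrt_card_mul {ι : Type*} [Fintype ι] {β : ι → Type*}
    [∀ i, SeminormedAddCommGroup (β i)] (v : PiLp 2 β) {C : ℝ} (hC : 0 ≤ C)
    (h : ∀ i, ‖v i‖ ≤ C) : ‖v‖ ≤ √(Fintype.card ι) * C := by
  rw [← Real.sqrt_sq hC, ← Real.sqrt_mul (Nat.cast_nonneg _), PiLp.norm_eq_of_L2]
  gcongr
  calc ∑ i, ‖v i‖ ^ 2 ≤ ∑ _i : ι, C ^ 2 :=
        Finset.sum_le_sum fun i _ => pow_le_pow_left₀ (norm_nonneg _) (h i) 2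
    _ = Fintype.card ι * C ^ 2 := by simp

theorem WithLp.prod_norm_le_add_of_L2 {α β : Type*} [SeminormedAddCommGroup α]
    [SeminormedAddCommGroup β] (g : WithLp 2 (α × β)) : ‖g‖ ≤ ‖g.fst‖ + ‖g.snd‖ := by
  rw [← Real.sqrt_sq (add_nonneg (norm_nonneg g.fst) (norm_nonneg g.snd)),
    WithLp.prod_norm_eq_of_L2]
  gcongr
  nlinarith [norm_nonneg g.fst, norm_nonneg g.snd]

theorem inner_glob (g h : Glob) :
    ⟪g, h⟫ = ⟪g.fst, h.fst⟫ + g.snd * h.snd := by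
  rw [WithLp.prod_inner_apply]; simp [RCLike.inner_apply, mul_comm]

theorem inner_wvec (σ : ℝ) {n : ℕ} {i j : Fin n} (hij : i ≠ j) (x v : Conf n) :
    ⟪v, wvec σ i j x⟫ =
      (σ * (rad x i + rad x j))⁻¹ * ⟪ctr v i - ctr v j, ctr x i - ctr x j⟫
        - σ * (rad v i + rad v j) := by
  rw [PiLp.inner_apply, ← Finset.sum_subset (Finset.subset_univ {i, j}) fun k _ hk => by
    simp only [Finset.mem_insert, Finset.mem_singleton, not_or] at hk
    simp [wvec, hk.1, hk.2], Finset.sum_pair hij, inner_glob, inner_glob]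
  simp only [wvec, rad, WithLp.equiv_apply, WithLp.ofLp_snd, mul_inv_rev, ctr, WithLp.ofLp_fst,
    WithLp.equiv_symm_apply, ↓reduceIte, true_or, WithLp.toLp_fst, inner_smul_right,
    inner_sub_right, WithLp.toLp_snd, mul_neg, hij.symm, or_true, inner_sub_left]
  ring

theorem sqrt_two_add_two_mul_sq_le {σ : ℝ} (hσ : 0 ≤ σ) : √(2 + 2 * σ ^ 2) ≤ 2 * max σ 1 := by
  have h1 : 1 ≤ max σ 1 := le_max_right σ 1
  have hσM : σ ≤ max σ 1 := le_max_left σ 1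
  rw [Real.sqrt_le_iff]
  constructor
  · positivity
  · nlinarith

def contactGraph (σ : ℝ) {n : ℕ} (x : Conf n) : SimpleGraph (Fin n) where
  Adj i j := i ≠ j ∧ ‖ctr x i - ctr x j‖ = σ * (rad x i + rad x j)
  symm := ⟨fun _ _ h => ⟨h.1.symm, by rw [norm_sub_rev, h.2, add_comm]⟩⟩
  loopless := ⟨fun _ h => h.1 rfl⟩

noncomputable def escapeVec (σ rm rp δ : ℝ) {n : ℕ} (x : Conf n) : Conf n := WithLp.toLp 2 fun k =>
  WithLp.toLp 2 (ctr x k - ctr x ((contactGraph σ x).connectedComponentMk k).out,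
    δ * (rm + rp - 2 * σ * rad x k) / (rp - rm))

section escapeVec

variable {σ rm rp δ : ℝ} {n : ℕ} {x : Conf n}

@[simp]
theorem ctr_escapeVec (k : Fin n) :
    ctr (escapeVec σ rm rp δ x) k =
      ctr x k - ctr x ((contactGraph σ x).connectedComponentMk k).out := by
  simp [escapeVec, ctr]

@[simp]
theorem rad_escapeVec (k : Fin n) :
    rad (escapeVec σ rm rp δ x) k = δ * (rm + rp - 2 * σ * rad x k) / (rp - rm) := by
  simp [escapeVec, rad]

theorem ctr_escapeVec_sub_of_adj {i j : Fin n} (h : (contactGraph σ x).Adj i j) :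
    ctr (escapeVec σ rm rp δ x) i - ctr (escapeVec σ rm rp δ x) j = ctr x i - ctr x j := by
  simp [SimpleGraph.ConnectedComponent.connectedComponentMk_eq_of_adj h]

theorem norm_ctr_escapeVec_le (hσ : 0 < σ) (hrp : 0 ≤ rp) (hx : ∀ k, rad x k ≤ rp / σ)
    (k : Fin n) : ‖ctr (escapeVec σ rm rp δ x) k‖ ≤ 2 * rp * (n - 1) := by
  have hedge : ∀ a b, (contactGraph σ x).Adj a b → ‖ctr x a - ctr x b‖ ≤ 2 * rp := by
    rintro a b ⟨-, hab⟩
    rw [hab]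
    calc σ * (rad x a + rad x b) ≤ σ * (rp / σ + rp / σ) := by gcongr <;> apply hx
      _ = 2 * rp := by field_simp; ring
  have := ((contactGraph σ x).connectedComponentMk k).out_eq
  simpa using SimpleGraph.Reachable.norm_sub_le_mul_card_sub_one hedge (by positivity)
    (SimpleGraph.ConnectedComponent.exact this.symm)

theorem abs_rad_escapeVec_le (hσ : 0 < σ) (hrmp : rm < rp) (hδ : 0 ≤ δ) {k : Fin n}
    (hk : rm / σ ≤ rad x k ∧ rad x k ≤ rp / σ) : |rad (escapeVec σ rm rp δ x) k| ≤ δ := by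
  have hσk : rm ≤ σ * rad x k ∧ σ * rad x k ≤ rp := by
    constructor
    · rw [div_le_iff₀' hσ] at hk; exact hk.1
    · rw [le_div_iff₀' hσ] at hk; exact hk.2
  rw [rad_escapeVec, abs_div, abs_mul, abs_of_nonneg hδ, abs_of_pos (sub_pos.2 hrmp),
    div_le_iff₀ (sub_pos.2 hrmp)]
  gcongr
  rw [abs_le]
  constructor <;> linarith

theorem rad_escapeVec_of_rad_eq_rm (hσ : σ ≠ 0) (hrmp : rm ≠ rp) {k : Fin n}
    (hk : rad x k = rm / σ) : rad (escapeVec σ rm rp δ x) k = δ := by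
  rw [rad_escapeVec, hk, div_eq_iff (sub_ne_zero.2 hrmp.symm)]
  field_simp
  ring

theorem neg_rad_escapeVec_of_rad_eq_rp (hσ : σ ≠ 0) (hrmp : rm ≠ rp) {k : Fin n}
    (hk : rad x k = rp / σ) : -rad (escapeVec σ rm rp δ x) k = δ := by
  rw [rad_escapeVec, hk, neg_div', div_eq_iff (sub_ne_zero.2 hrmp.symm)]
  field_simp
  ring

theorem norm_escapeVec_le (hσ : 0 < σ) (hrmp : rm < rp) (hδ : 0 ≤ δ) (hδrp : δ ≤ 2 * rp)
    (hx : ∀ k, rm / σ ≤ rad x k ∧ rad x k ≤ rp / σ) :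
    ‖escapeVec σ rm rp δ x‖ ≤ √n * (2 * rp * n) := by
  have hrp : 0 ≤ rp := by linarith
  simpa using PiLp.norm_le_sqrt_card_mul _ (by positivity) fun k => calc
    ‖escapeVec σ rm rp δ x k‖ ≤ ‖ctr (escapeVec σ rm rp δ x) k‖ + |rad (escapeVec σ rm rp δ x) k| :=
        WithLp.prod_norm_le_add_of_L2 _
    _ ≤ 2 * rp * (n - 1) + δ := add_le_add (norm_ctr_escapeVec_le hσ hrp (fun k => (hx k).2) k)
        (abs_rad_escapeVec_le hσ hrmp hδ (hx k))
    _ ≤ 2 * rp * n := by linarith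

theorem le_inner_escapeVec_wvec (hσ : 0 < σ) (hrmp : rm < rp) (hδ : 0 ≤ δ)
    (hx : ∀ k, rm / σ ≤ rad x k ∧ rad x k ≤ rp / σ) {i j : Fin n}
    (hij : (contactGraph σ x).Adj i j) :
    2 * rm - 2 * σ * δ ≤ ⟪escapeVec σ rm rp δ x, wvec σ i j x⟫ := by
  have hd : 0 < rp - rm := sub_pos.2 hrmp
  set s := σ * (rad x i + rad x j) with hs
  have hs2rm : 2 * rm ≤ s := by
    have := (div_le_iff₀' hσ).1 (hx i).1
    have := (div_le_iff₀' hσ).1 (hx j).1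
    linarith
  have hrad : σ * (rad (escapeVec σ rm rp δ x) i + rad (escapeVec σ rm rp δ x) j) =
      2 * σ * δ * (rm + rp - s) / (rp - rm) := by
    rw [rad_escapeVec, rad_escapeVec, hs]
    field_simp
    ring
  rw [inner_wvec σ hij.1, ctr_escapeVec_sub_of_adj hij, real_inner_self_eq_norm_sq, hij.2, ← hs,
    pow_two, ← mul_assoc, inv_mul_mul_self, hrad]
  have hgap : s - 2 * σ * δ * (rm + rp - s) / (rp - rm) - (2 * rm - 2 * σ * δ) =
      (s - 2 * rm) * (1 + 2 * σ * δ / (rp - rm)) := by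
    field_simp
    ring
  have : 0 ≤ (s - 2 * rm) * (1 + 2 * σ * δ / (rp - rm)) := by
    apply mul_nonneg <;> [linarith; positivity]
  linarith

theorem le_inner_escapeVec_nvec (hσ : 0 < σ) (hrmp : rm < rp) (hδ : 0 ≤ δ)
    (hδrm : 2 * max σ 1 * δ ≤ rm) (hx : ∀ k, rm / σ ≤ rad x k ∧ rad x k ≤ rp / σ)
    {i j : Fin n} (hij : (contactGraph σ x).Adj i j) :
    δ ≤ ⟪escapeVec σ rm rp δ x, nvec σ i j x⟫ := by
  have hM : 1 ≤ max σ 1 := le_max_right σ 1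
  have hMδ : 0 ≤ 2 * max σ 1 * δ := by positivity
  rw [nvec, real_inner_smul_right]
  calc δ = (2 * max σ 1)⁻¹ * (2 * max σ 1 * δ) := by field_simp
    _ ≤ (2 * max σ 1)⁻¹ * (2 * rm - 2 * max σ 1 * δ) := by gcongr; linarith
    _ ≤ (√(2 + 2 * σ ^ 2))⁻¹ * (2 * rm - 2 * σ * δ) := by
        gcongr
        · linarith
        · exact sqrt_two_add_two_mul_sq_le hσ.le
        · exact le_max_left σ 1
    _ ≤ _ := mul_le_mul_of_nonneg_left (le_inner_escapeVec_wvec hσ hrmp hδ hx hij)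
        (by positivity)

theorem div_mul_norm_escapeVec_le {M : ℝ} (hn : 0 < n) (hM : 0 < M) (hσ : 0 < σ)
    (hrm : 0 < rm) (hrmp : rm < rp) (hδ : 0 ≤ δ) (hδrp : δ ≤ 2 * rp)
    (hx : ∀ k, rm / σ ≤ rad x k ∧ rad x k ≤ rp / σ) :
    rm / (4 * rp * M * (n : ℝ) ^ ((3 : ℝ) / 2)) * ‖escapeVec σ rm rp δ x‖ ≤ rm / (2 * M) := by
  have hrp : 0 < rp := hrm.trans hrmp
  have hpow : (n : ℝ) ^ ((3 : ℝ) / 2) = n * √n := by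
    rw [show (3 : ℝ) / 2 = 1 + 1 / 2 by norm_num, Real.rpow_add (by positivity),
      Real.rpow_one, ← Real.sqrt_eq_rpow]
  calc _ ≤ rm / (4 * rp * M * (n : ℝ) ^ ((3 : ℝ) / 2)) * (√n * (2 * rp * n)) :=
        mul_le_mul_of_nonneg_left (norm_escapeVec_le hσ hrmp hδ hδrp hx) (by positivity)
    _ = rm / (2 * M) := by
        rw [hpow]
        field_simp
        ring

end escapeVec

theorem statement8_general (n : ℕ) (σ : ℝ) (hσ : 0 < σ) (rm rp : ℝ)
    (hrm : 0 < rm) (hrmp : rm < rp)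
    (x : Conf n) (hx : x ∈ AgSet σ rm rp n)
    (hactive :
      (∃ i j : Fin n, i ≠ j ∧ ‖ctr x i - ctr x j‖ = σ * (rad x i + rad x j)) ∨
      (∃ i : Fin n, rad x i = rp / σ) ∨ (∃ i : Fin n, rad x i = rm / σ)) :
    ∃ v : Conf n, v ≠ 0 ∧
      (∀ i j : Fin n, i ≠ j → ‖ctr x i - ctr x j‖ = σ * (rad x i + rad x j) →
        ⟪v, nvec σ i j x⟫ ≥ rm / (4 * rp * max σ 1 * (n : ℝ) ^ ((3 : ℝ) / 2)) * ‖v‖) ∧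
      (∀ i : Fin n, rad x i = rp / σ →
        -rad v i ≥ rm / (4 * rp * max σ 1 * (n : ℝ) ^ ((3 : ℝ) / 2)) * ‖v‖) ∧
      (∀ i : Fin n, rad x i = rm / σ →
        rad v i ≥ rm / (4 * rp * max σ 1 * (n : ℝ) ^ ((3 : ℝ) / 2)) * ‖v‖) := by
  have hn : 0 < n := by rcases hactive with ⟨i, -⟩ | ⟨i, -⟩ | ⟨i, -⟩ <;> exact i.pos
  have hM : 0 < max σ 1 := lt_max_of_lt_right one_pos
  set δ := rm / (2 * max σ 1) with hδdef
  have hδ : 0 < δ := by positivity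
  have hδrm : 2 * max σ 1 * δ = rm := by rw [hδdef]; field_simp
  have hδrp : δ ≤ 2 * rp := by nlinarith [le_max_right σ 1]
  set v := escapeVec σ rm rp δ x
  have hnorm := div_mul_norm_escapeVec_le hn hM hσ hrm hrmp hδ.le hδrp hx.1
  have hpair : ∀ i j, i ≠ j → ‖ctr x i - ctr x j‖ = σ * (rad x i + rad x j) →
      δ ≤ ⟪v, nvec σ i j x⟫ := fun i j hij hc =>
    le_inner_escapeVec_nvec hσ hrmp hδ.le hδrm.le hx.1 ⟨hij, hc⟩
  have hup : ∀ i, rad x i = rp / σ → -rad v i = δ := fun i =>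
    neg_rad_escapeVec_of_rad_eq_rp hσ.ne' hrmp.ne
  have hlow : ∀ i, rad x i = rm / σ → rad v i = δ := fun i =>
    rad_escapeVec_of_rad_eq_rm hσ.ne' hrmp.ne
  refine ⟨v, ?_, fun i j hij hc => hnorm.trans (hpair i j hij hc),
    fun i hi => (hup i hi).symm ▸ hnorm, fun i hi => (hlow i hi).symm ▸ hnorm⟩
  intro hv
  have : δ ≤ 0 := by
    rcases hactive with ⟨i, j, hij, hc⟩ | ⟨i, hi⟩ | ⟨i, hi⟩
    · simpa [hv] using hpair i j hij hc
    · simpa [hv, rad] using (hup i hi).ge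
    · simpa [hv, rad] using (hlow i hi).ge
  linarith

theorem statement8 (n : ℕ) (hn : 2 ≤ n) (σ : ℝ) (hσ : 0 < σ) (rm rp : ℝ)
    (hrm : 0 < rm) (hrmp : rm < rp)
    (x : Conf n) (hx : x ∈ AgSet σ rm rp n)
    (hactive :
      (∃ i j : Fin n, i ≠ j ∧ ‖ctr x i - ctr x j‖ = σ * (rad x i + rad x j)) ∨
      (∃ i : Fin n, rad x i = rp / σ) ∨ (∃ i : Fin n, rad x i = rm / σ)) :
    ∃ v : Conf n, v ≠ 0 ∧
      (∀ i j : Fin n, i ≠ j → ‖ctr x i - ctr x j‖ = σ * (rad x i + rad x j) →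
        ⟪v, nvec σ i j x⟫ ≥ rm / (4 * rp * max σ 1 * (n : ℝ) ^ ((3 : ℝ) / 2)) * ‖v‖) ∧
      (∀ i : Fin n, rad x i = rp / σ →
        -rad v i ≥ rm / (4 * rp * max σ 1 * (n : ℝ) ^ ((3 : ℝ) / 2)) * ‖v‖) ∧
      (∀ i : Fin n, rad x i = rm / σ →
        rad v i ≥ rm / (4 * rp * max σ 1 * (n : ℝ) ^ ((3 : ℝ) / 2)) * ‖v‖) :=
  statement8_general n σ hσ rm rp hrm hrmp x hx hactive
end

section
/- Let M ≥ 2 be an integer, 0 < r_- < r_+, 0 < ε ≤ 1, and let ψ : ℝ³×ℝ → [0,∞] be measurable. Then, with ⛓^M_n(ε) = ∅ for n < M, the following inequality holds in [0,∞]: Σ_{n=0}^{∞} (1/n!) ν_n(⛓^M_n(ε)) ≤ ( ∫_{ℝ³×[r_-,r_+]} e^{−ψ(x,x̌)} dx dx̌ ) · ( 4π(2r_+ + 1)²(r_+ − r_-) ε )^{M−1} · Σ_{m=0}^{∞} (1/m!) ν_m((ℝ³×ℝ)^m). In particular, the probability that a random configuration drawn from the normalized Poisson mixture of the ν_n contains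 an ε-chain of M globules is at most ( ∫_{ℝ³×[r_-,r_+]} e^{−ψ} ) · ( 4π(2r_+ + 1)²(r_+ − r_-) )^{M−1} ε^{M−1}. -/
open MeasureTheory
open scoped ENNReal

/-- A globule: a center in `ℝ³` and a radius in `ℝ`. -/
abbrev E3R : Type := EuclideanSpace ℝ (Fin 3) × ℝ

/-- The index `i - 1` in `Fin M` (equal to `i` itself when `i = 0`). -/
def prev {M : ℕ} (i : Fin M) : Fin M :=
  ⟨i.val - 1, Nat.lt_of_le_of_lt (Nat.sub_le _ _) i.isLt⟩

noncomputable section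

/-- `expNeg a = e^{-a}` for `a ∈ [0,∞]`, with `e^{-∞} = 0`. -/
def expNeg (a : ℝ≥0∞) : ℝ≥0∞ :=
  if a = ∞ then 0 else ENNReal.ofReal (Real.exp (-a.toReal))

/-- The set of allowed configurations of `n` globules: all radii in `[r_-,r_+]`
and no two globules overlap. -/
def AgN (rm rp : ℝ) (n : ℕ) : Set (Fin n → E3R) :=
  {x | (∀ i, (x i).2 ∈ Set.Icc rm rp) ∧
    ∀ i j : Fin n, i ≠ j → (x i).2 + (x j).2 ≤ ‖(x i).1 - (x j).1‖}

/-- The configurations of `n` globules containing an `ε`-chain of `M` globules: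
there are distinct indices `i₁,…,i_M` with consecutive globules `ε`-close. -/
def chainSet (M n : ℕ) (ε : ℝ) : Set (Fin n → E3R) :=
  {x | ∃ f : Fin M → Fin n, Function.Injective f ∧
    ∀ k : Fin M, (k : ℕ) ≠ 0 →
      ‖(x (f k)).1 - (x (f (prev k))).1‖ < (x (f k)).2 + (x (f (prev k))).2 + ε}

/-- The measure `ν_n(A) = ∫_A exp(-∑ᵢ ψ(xᵢ,x̌ᵢ)) 1_{𝒜_g}(𝐱) d𝐱` on `(ℝ³×ℝ)ⁿ`. -/
def nu (ψ : E3R → ℝ≥0∞) (rm rp : ℝ) (n : ℕ) (A : Set (Fin n → E3R)) : ℝ≥0∞ :=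
  ∫⁻ x in A, (∏ i : Fin n, expNeg (ψ (x i))) * (AgN rm rp n).indicator (fun _ => 1) x

end

/-!
A configuration containing an `ε`-chain has `M` distinct globules, consecutive ones disjoint but
at gap less than `ε`. A union bound over the `n (n - 1) ⋯ (n - M + 1)` choices of these globules,
followed by separating them from the other `n - M` globules (forgetting the non-overlap
constraints between the two groups), bounds `ν_n` of the chain set by that falling factorial times
an integral over chains times `ν_{n-M}` of everything. The chain integral is done one globule at a
time: given its predecessor, a globule of radius `r ∈ [r_-, r_+]` has its centre in a spherical
shell of inner radius at most `2 r_+` and width `ε`, whose volume is at most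
`4π (2 r_+ + 1)² ε`. Finally `n!⁻¹ · n (n - 1) ⋯ (n - M + 1) = (n - M)!⁻¹`, and the sum over `n`
reindexes to the partition function.
-/

open MeasureTheory Set Function Real
open scoped ENNReal Nat

noncomputable section PathWeight

variable {X : Type*}

def pathWeight (w : X → ℝ≥0∞) (L : X → X → ℝ≥0∞) (m : ℕ) (y : Fin (m + 1) → X) : ℝ≥0∞ :=
  (∏ i, w (y i)) * ∏ k : Fin m, L (y k.castSucc) (y k.succ)

variable {w : X → ℝ≥0∞} {L : X → X → ℝ≥0∞}

lemma measurable_pathWeight [MeasurableSpace X] (hw : Measurable w)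
    (hL : Measurable (uncurry L)) (m : ℕ) : Measurable (pathWeight w L m) :=
  (Finset.measurable_prod _ fun i _ => hw.comp (measurable_pi_apply i)).mul <|
    Finset.measurable_prod _ fun k _ =>
      hL.comp (f := fun y : Fin (m + 1) → X => (y k.castSucc, y k.succ)) (by fun_prop)

lemma pathWeight_succ (m : ℕ) (y : Fin (m + 2) → X) :
    pathWeight w L (m + 1) y =
      pathWeight w L m (Fin.init y) *
        (w (y (Fin.last _)) * L (Fin.init y (Fin.last m)) (y (Fin.last _))) := by
  simp only [pathWeight, Fin.prod_univ_castSucc (n := m + 1), Fin.prod_univ_castSucc (n := m),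
    Fin.init, Fin.succ_last, Fin.succ_castSucc]
  ring

lemma pathWeight_eq_zero {m : ℕ} {y : Fin (m + 1) → X} {i : Fin (m + 1)} (h : w (y i) = 0) :
    pathWeight w L m y = 0 := by
  rw [pathWeight, Finset.prod_eq_zero (Finset.mem_univ i) h, zero_mul]

lemma lintegral_pathWeight_le [MeasureSpace X] [SigmaFinite (volume : Measure X)]
    (hw : Measurable w) (hL : Measurable (uncurry L)) {c : ℝ≥0∞}
    (hstep : ∀ p, w p ≠ 0 → ∫⁻ q, w q * L p q ≤ c) (m : ℕ) :
    ∫⁻ y, pathWeight w L m y ≤ (∫⁻ x, w x) * c ^ m := by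
  induction m with
  | zero =>
    have h : ∫⁻ y : Fin 1 → X, w (y 0) = ∫⁻ x, w x := by
      -- `rfl` identifies the `Fintype (Fin 1)` instance coming from `Unique` with the usual one
      rw [← (volume_preserving_funUnique (Fin 1) X).lintegral_comp hw]; rfl
    simp [pathWeight, h]
  | succ m ih =>
    have hF : Measurable fun qz : X × (Fin (m + 1) → X) =>
        pathWeight w L m qz.2 * (w qz.1 * L (qz.2 (Fin.last m)) qz.1) :=
      ((measurable_pathWeight hw hL m).comp measurable_snd).mul ((hw.comp measurable_fst).mul
        (hL.comp (f := fun qz : X × (Fin (m + 1) → X) => (qz.2 (Fin.last m), qz.1)) (by fun_prop)))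
    calc ∫⁻ y, pathWeight w L (m + 1) y
        = ∫⁻ qz : X × (Fin (m + 1) → X),
            pathWeight w L m qz.2 * (w qz.1 * L (qz.2 (Fin.last m)) qz.1) := by
          have he := volume_preserving_piFinSuccAbove (fun _ => X) (Fin.last (m + 1))
          rw [← he.lintegral_comp hF]
          simp [pathWeight_succ, Fin.init]
      _ = ∫⁻ z, pathWeight w L m z * ∫⁻ q, w q * L (z (Fin.last m)) q := by
          rw [Measure.volume_eq_prod, lintegral_prod_symm _ hF.aemeasurable]
          refine lintegral_congr fun z => ?_
          have hmeas : Measurable fun q => w q * L (z (Fin.last m)) q :=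
            hw.mul (hL.comp (f := fun q => (z (Fin.last m), q)) (by fun_prop))
          simp only [lintegral_const_mul _ hmeas]
      _ ≤ ∫⁻ z, pathWeight w L m z * c := by
          refine lintegral_mono fun z => ?_
          by_cases h : w (z (Fin.last m)) = 0
          · rw [pathWeight_eq_zero h, zero_mul, zero_mul]
          · gcongr
            exact hstep _ h
      _ = (∫⁻ z, pathWeight w L m z) * c := lintegral_mul_const _ (measurable_pathWeight hw hL m)
      _ ≤ (∫⁻ x, w x) * c ^ (m + 1) := by
          rw [pow_succ, ← mul_assoc]
          gcongr

end PathWeight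

lemma lintegral_mul_comp_sumEquiv {X : Type*} [MeasureSpace X] [SigmaFinite (volume : Measure X)]
    {ι κ ι' : Type*} [Fintype ι] [Fintype κ] [Fintype ι'] (σ : ι ⊕ κ ≃ ι')
    {F : (ι → X) → ℝ≥0∞} {G : (κ → X) → ℝ≥0∞} (hF : Measurable F) (hG : Measurable G) :
    ∫⁻ x : ι' → X, F (fun i => x (σ (.inl i))) * G (fun j => x (σ (.inr j))) =
      (∫⁻ y, F y) * ∫⁻ z, G z := by
  have hσ := (volume_measurePreserving_piCongrLeft (fun _ => X) σ).symm
  have hsum := volume_measurePreserving_sumPiEquivProdPi (fun _ : ι ⊕ κ => X)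
  have h := (hsum.comp hσ).lintegral_comp (f := fun z => F z.1 * G z.2) (by fun_prop)
  rw [← lintegral_prod_mul hF.aemeasurable hG.aemeasurable, ← Measure.volume_eq_prod, ← h]
  rfl

lemma Function.Embedding.exists_sumEquiv_inl_eq {k n : ℕ} (g : Fin k ↪ Fin n) :
    ∃ σ : Fin k ⊕ Fin (n - k) ≃ Fin n, ∀ i, σ (.inl i) = g i := by
  classical
  have hcard : Fintype.card ↥(range g)ᶜ = n - k := by
    rw [Fintype.card_compl_set, Set.card_range_of_injective g.injective]
    simp
  refine ⟨((Equiv.ofInjective g g.injective).sumCongr (Fintype.equivFinOfCardEq hcard).symm).trans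
    (Equiv.Set.sumCompl (range g)), fun i => ?_⟩
  simp

lemma tsum_inv_factorial_mul_descFactorial (k : ℕ) (b : ℕ → ℝ≥0∞) :
    ∑' n, (n ! : ℝ≥0∞)⁻¹ * (n.descFactorial k * b (n - k)) = ∑' m, (m ! : ℝ≥0∞)⁻¹ * b m := by
  rw [← ENNReal.summable.sum_add_tsum_nat_add' (k := k)]
  have hlow : ∀ n ∈ Finset.range k, (n ! : ℝ≥0∞)⁻¹ * (n.descFactorial k * b (n - k)) = 0 := by
    intro n hn
    rw [Nat.descFactorial_eq_zero_iff_lt.mpr (Finset.mem_range.mp hn)]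
    simp
  rw [Finset.sum_eq_zero hlow, zero_add]
  refine tsum_congr fun m => ?_
  have hfac : ((m + k)! : ℝ≥0∞) = m ! * (m + k).descFactorial k := by
    rw [← Nat.factorial_mul_descFactorial (Nat.le_add_left k m), Nat.add_sub_cancel]
    push_cast; rfl
  have hd : ((m + k).descFactorial k : ℝ≥0∞) ≠ 0 := by
    simp [Nat.descFactorial_eq_zero_iff_lt]
  rw [hfac, Nat.add_sub_cancel, ENNReal.mul_inv (by simp) (by simp), mul_assoc,
    ENNReal.inv_mul_cancel_left hd (by simp)]

lemma expNeg_le_one (a : ℝ≥0∞) : expNeg a ≤ 1 := by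
  unfold expNeg
  split_ifs
  · exact zero_le_one
  · exact ENNReal.ofReal_le_one.mpr
      (Real.exp_le_one_iff.mpr (neg_nonpos.mpr ENNReal.toReal_nonneg))

lemma measurable_expNeg : Measurable expNeg :=
  Measurable.ite (measurableSet_singleton ⊤) measurable_const
    (ENNReal.measurable_ofReal.comp (Real.measurable_exp.comp ENNReal.measurable_toReal.neg))

lemma volume_shell_le (p : EuclideanSpace ℝ (Fin 3)) {s ε : ℝ} (hs : 0 ≤ s) (hε : 0 ≤ ε) :
    volume {z | s ≤ ‖z - p‖ ∧ ‖z - p‖ < s + ε} ≤ ENNReal.ofReal (4 * π * (s + ε) ^ 2 * ε) := by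
  have hshell : {z | s ≤ ‖z - p‖ ∧ ‖z - p‖ < s + ε} = Metric.ball p (s + ε) \ Metric.ball p s := by
    ext z
    simp [dist_eq_norm, and_comm]
  have hcube : (s + ε) ^ 3 - s ^ 3 ≤ 3 * (s + ε) ^ 2 * ε := by
    nlinarith [mul_nonneg (mul_nonneg hs hε) hε, pow_nonneg hε 3]
  rw [hshell, measure_sdiff (Metric.ball_subset_ball (by linarith))
      measurableSet_ball.nullMeasurableSet (by finiteness),
    EuclideanSpace.volume_ball_fin_three, EuclideanSpace.volume_ball_fin_three,
    ← ENNReal.ofReal_pow (by linarith), ← ENNReal.ofReal_pow hs,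
    ← ENNReal.ofReal_mul (by positivity), ← ENNReal.ofReal_mul (by positivity),
    ← ENNReal.ofReal_sub _ (by positivity)]
  refine ENNReal.ofReal_le_ofReal ?_
  nlinarith [Real.pi_pos]

noncomputable section Globules

def globuleWeight (ψ : E3R → ℝ≥0∞) (rm rp : ℝ) : E3R → ℝ≥0∞ :=
  (univ ×ˢ Icc rm rp : Set E3R).indicator fun y => expNeg (ψ y)

def linkSet (ε : ℝ) : Set (E3R × E3R) :=
  {pq | pq.1.2 + pq.2.2 ≤ ‖pq.2.1 - pq.1.1‖ ∧ ‖pq.2.1 - pq.1.1‖ < pq.1.2 + pq.2.2 + ε}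

def link (ε : ℝ) (p q : E3R) : ℝ≥0∞ :=
  (linkSet ε).indicator 1 (p, q)

lemma measurableSet_linkSet (ε : ℝ) : MeasurableSet (linkSet ε) := by
  unfold linkSet; measurability

lemma measurable_link (ε : ℝ) : Measurable (uncurry (link ε)) :=
  (measurable_const (a := (1 : ℝ≥0∞))).indicator (measurableSet_linkSet ε)

lemma measurable_globuleWeight {ψ : E3R → ℝ≥0∞} (hψ : Measurable ψ) (rm rp : ℝ) :
    Measurable (globuleWeight ψ rm rp) :=
  (measurable_expNeg.comp hψ).indicator (MeasurableSet.univ.prod measurableSet_Icc)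

lemma lintegral_globuleWeight (ψ : E3R → ℝ≥0∞) (rm rp : ℝ) :
    ∫⁻ y, globuleWeight ψ rm rp y = ∫⁻ y in (univ ×ˢ Icc rm rp : Set E3R), expNeg (ψ y) :=
  lintegral_indicator (MeasurableSet.univ.prod measurableSet_Icc) _

/-- Given `p`, the admissible `q` of radius `r` have their centres in a shell of inner radius
`p.2 + r ≤ 2 r_+` and width `ε` around the centre of `p`. -/
lemma lintegral_globuleWeight_mul_link_le (ψ : E3R → ℝ≥0∞) {rm rp ε : ℝ} (hrm : 0 ≤ rm)
    (hε0 : 0 ≤ ε) (hε1 : ε ≤ 1) {p : E3R} (hp : p.2 ∈ Icc rm rp) :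
    ∫⁻ q, globuleWeight ψ rm rp q * link ε p q ≤
      ENNReal.ofReal (4 * π * (2 * rp + 1) ^ 2 * (rp - rm) * ε) := by
  set S : Set E3R := {q | q.2 ∈ Icc rm rp ∧ (p, q) ∈ linkSet ε}
  have hS : MeasurableSet S :=
    (measurableSet_Icc.preimage measurable_snd).inter
      (measurableSet_linkSet ε |>.preimage (measurable_const.prodMk measurable_id))
  have hslice : ∀ r, volume ((fun z => (z, r)) ⁻¹' S) ≤
      (Icc rm rp).indicator (fun _ => ENNReal.ofReal (4 * π * (2 * rp + 1) ^ 2 * ε)) r := by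
    intro r
    by_cases hr : r ∈ Icc rm rp
    · rw [indicator_of_mem hr]
      have hshell := volume_shell_le p.1 (s := p.2 + r) (by linarith [hp.1, hr.1]) hε0
      refine (measure_mono fun z hz => hz.2).trans (hshell.trans (ENNReal.ofReal_le_ofReal ?_))
      have : 0 ≤ p.2 + r + ε := by linarith [hp.1, hr.1]
      have : p.2 + r + ε ≤ 2 * rp + 1 := by linarith [hp.2, hr.2]
      gcongr
    · rw [indicator_of_notMem hr, nonpos_iff_eq_zero, measure_eq_zero_iff_ae_notMem]
      exact .of_forall fun z hz => hr hz.1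
  calc ∫⁻ q, globuleWeight ψ rm rp q * link ε p q ≤ ∫⁻ q, S.indicator 1 q := by
        refine lintegral_mono fun q => ?_
        simp only [globuleWeight, link, S, indicator, mem_prod, mem_univ, true_and, mem_ofPred_eq,
          Pi.one_apply]
        split_ifs <;> simp_all [expNeg_le_one]
    _ = volume S := lintegral_indicator_one hS
    _ ≤ ∫⁻ r, (Icc rm rp).indicator (fun _ => ENNReal.ofReal (4 * π * (2 * rp + 1) ^ 2 * ε)) r := by
        rw [Measure.volume_eq_prod, Measure.prod_apply_symm hS]
        exact lintegral_mono hslice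
    _ = ENNReal.ofReal (4 * π * (2 * rp + 1) ^ 2 * (rp - rm) * ε) := by
        rw [lintegral_indicator_const measurableSet_Icc, Real.volume_Icc,
          ← ENNReal.ofReal_mul (by positivity)]
        ring_nf

end Globules

noncomputable section Configurations

variable {ψ : E3R → ℝ≥0∞} {rm rp ε : ℝ}

def configWeight (ψ : E3R → ℝ≥0∞) (rm rp : ℝ) (n : ℕ) (x : Fin n → E3R) : ℝ≥0∞ :=
  (∏ i, expNeg (ψ (x i))) * (AgN rm rp n).indicator (fun _ => 1) x

lemma nu_eq_setLIntegral_configWeight (ψ : E3R → ℝ≥0∞) (rm rp : ℝ) (n : ℕ)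
    (A : Set (Fin n → E3R)) : nu ψ rm rp n A = ∫⁻ x in A, configWeight ψ rm rp n x :=
  rfl

lemma measurableSet_AgN (rm rp : ℝ) (n : ℕ) : MeasurableSet (AgN rm rp n) := by
  unfold AgN
  measurability

lemma measurable_configWeight (hψ : Measurable ψ) (rm rp : ℝ) (n : ℕ) :
    Measurable (configWeight ψ rm rp n) :=
  (Finset.measurable_prod _ fun i _ =>
    measurable_expNeg.comp (hψ.comp (measurable_pi_apply i))).mul
      (measurable_const.indicator (measurableSet_AgN rm rp n))

lemma configWeight_of_mem {n : ℕ} {x : Fin n → E3R} (hx : x ∈ AgN rm rp n) :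
    configWeight ψ rm rp n x = ∏ i, expNeg (ψ (x i)) := by
  rw [configWeight, indicator_of_mem hx, mul_one]

lemma comp_mem_AgN {k n : ℕ} {x : Fin n → E3R} (hx : x ∈ AgN rm rp n) {e : Fin k → Fin n}
    (he : Injective e) : (fun i => x (e i)) ∈ AgN rm rp k :=
  ⟨fun i => hx.1 (e i), fun _ _ hij => hx.2 _ _ (he.ne hij)⟩

def chainSetAlong {M n : ℕ} (g : Fin M ↪ Fin n) (ε : ℝ) : Set (Fin n → E3R) :=
  {x | ∀ k : Fin M, (k : ℕ) ≠ 0 →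
    ‖(x (g k)).1 - (x (g (prev k))).1‖ < (x (g k)).2 + (x (g (prev k))).2 + ε}

lemma chainSet_eq_iUnion (M n : ℕ) (ε : ℝ) :
    chainSet M n ε = ⋃ g : Fin M ↪ Fin n, chainSetAlong g ε := by
  ext x
  simp only [chainSet, chainSetAlong, mem_iUnion, mem_ofPred_eq]
  exact ⟨fun ⟨f, hf, h⟩ => ⟨⟨f, hf⟩, h⟩, fun ⟨g, h⟩ => ⟨g, g.injective, h⟩⟩

lemma prev_succ {m : ℕ} (k : Fin m) : prev k.succ = k.castSucc := by
  ext
  simp [prev]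

lemma pathWeight_of_mem_chainSetAlong {m n : ℕ} {g : Fin (m + 1) ↪ Fin n} {x : Fin n → E3R}
    (hA : x ∈ AgN rm rp n) (hx : x ∈ chainSetAlong g ε) :
    pathWeight (globuleWeight ψ rm rp) (link ε) m (fun i => x (g i)) =
      ∏ i, expNeg (ψ (x (g i))) := by
  have hweight : ∀ i, globuleWeight ψ rm rp (x (g i)) = expNeg (ψ (x (g i))) := fun i =>
    indicator_of_mem (mk_mem_prod (mem_univ _) (hA.1 (g i))) _
  have hlink : ∀ k : Fin m, link ε (x (g k.castSucc)) (x (g k.succ)) = 1 := by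
    intro k
    have hchain := hx k.succ (by simp)
    rw [prev_succ] at hchain
    have hdisj := hA.2 (g k.succ) (g k.castSucc) (g.injective.ne (by simp [Fin.ext_iff]))
    rw [link, indicator_of_mem, Pi.one_apply]
    exact ⟨by linarith, by linarith⟩
  simp [pathWeight, hweight, hlink]

/-- Only the non-overlap constraints between the chain and the other globules are forgotten. -/
lemma configWeight_le_of_mem_chainSetAlong {m n r : ℕ} {g : Fin (m + 1) ↪ Fin n}
    {σ : Fin (m + 1) ⊕ Fin r ≃ Fin n} (hσ : ∀ i, σ (.inl i) = g i) {x : Fin n → E3R}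
    (hx : x ∈ chainSetAlong g ε) :
    configWeight ψ rm rp n x ≤
      pathWeight (globuleWeight ψ rm rp) (link ε) m (fun i => x (σ (.inl i))) *
        configWeight ψ rm rp r (fun j => x (σ (.inr j))) := by
  by_cases hA : x ∈ AgN rm rp n
  · have hrest := comp_mem_AgN (e := fun j => σ (.inr j)) hA (σ.injective.comp Sum.inr_injective)
    simp only [hσ]
    rw [pathWeight_of_mem_chainSetAlong hA hx, configWeight_of_mem hA, configWeight_of_mem hrest,
      ← σ.prod_comp, Fintype.prod_sum_type]
    simp [hσ]
  · simp [configWeight, indicator_of_notMem hA]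

lemma nu_chainSetAlong_le (hψ : Measurable ψ) {m n : ℕ} (g : Fin (m + 1) ↪ Fin n) :
    nu ψ rm rp n (chainSetAlong g ε) ≤
      (∫⁻ y, pathWeight (globuleWeight ψ rm rp) (link ε) m y) * nu ψ rm rp (n - (m + 1)) univ := by
  obtain ⟨σ, hσ⟩ := g.exists_sumEquiv_inl_eq
  have hpath := measurable_pathWeight (measurable_globuleWeight hψ rm rp) (measurable_link ε) m
  have hconf := measurable_configWeight hψ rm rp (n - (m + 1))
  have hinl : Measurable fun (x : Fin n → E3R) (i : Fin (m + 1)) => x (σ (.inl i)) := by fun_prop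
  have hinr : Measurable fun (x : Fin n → E3R) (j : Fin (n - (m + 1))) => x (σ (.inr j)) := by
    fun_prop
  rw [nu_eq_setLIntegral_configWeight]
  calc ∫⁻ x in chainSetAlong g ε, configWeight ψ rm rp n x
      ≤ ∫⁻ x in chainSetAlong g ε, pathWeight (globuleWeight ψ rm rp) (link ε) m
          (fun i => x (σ (.inl i))) *
            configWeight ψ rm rp (n - (m + 1)) (fun j => x (σ (.inr j))) :=
        setLIntegral_mono ((hpath.comp hinl).mul (hconf.comp hinr)) fun _ hx =>
          configWeight_le_of_mem_chainSetAlong hσ hx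
    _ ≤ ∫⁻ x : Fin n → E3R, pathWeight (globuleWeight ψ rm rp) (link ε) m
          (fun i => x (σ (.inl i))) *
            configWeight ψ rm rp (n - (m + 1)) (fun j => x (σ (.inr j))) :=
        setLIntegral_le_lintegral _ _
    _ = _ := by
        rw [lintegral_mul_comp_sumEquiv σ hpath hconf, nu_eq_setLIntegral_configWeight,
          Measure.restrict_univ]

end Configurations

section ChainBound

variable {ψ : E3R → ℝ≥0∞} {rm rp ε : ℝ}

lemma nu_chainSet_le (hψ : Measurable ψ) (hrm : 0 ≤ rm) (hε0 : 0 ≤ ε) (hε1 : ε ≤ 1) (m n : ℕ) :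
    nu ψ rm rp n (chainSet (m + 1) n ε) ≤ n.descFactorial (m + 1) *
      ((∫⁻ y in (univ ×ˢ Icc rm rp : Set E3R), expNeg (ψ y)) *
        ENNReal.ofReal (4 * π * (2 * rp + 1) ^ 2 * (rp - rm) * ε) ^ m *
        nu ψ rm rp (n - (m + 1)) univ) := by
  have hpath : ∫⁻ y, pathWeight (globuleWeight ψ rm rp) (link ε) m y ≤
      (∫⁻ y in (univ ×ˢ Icc rm rp : Set E3R), expNeg (ψ y)) *
        ENNReal.ofReal (4 * π * (2 * rp + 1) ^ 2 * (rp - rm) * ε) ^ m := by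
    rw [← lintegral_globuleWeight]
    refine lintegral_pathWeight_le (measurable_globuleWeight hψ rm rp) (measurable_link ε)
      (fun p hp => ?_) m
    exact lintegral_globuleWeight_mul_link_le ψ hrm hε0 hε1 (mem_of_indicator_ne_zero hp).2
  rw [chainSet_eq_iUnion, nu_eq_setLIntegral_configWeight]
  calc ∫⁻ x in ⋃ g : Fin (m + 1) ↪ Fin n, chainSetAlong g ε, configWeight ψ rm rp n x
      ≤ ∑' g : Fin (m + 1) ↪ Fin n, ∫⁻ x in chainSetAlong g ε, configWeight ψ rm rp n x :=
        lintegral_iUnion_le _ _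
    _ ≤ ∑' _ : Fin (m + 1) ↪ Fin n,
          (∫⁻ y in (univ ×ˢ Icc rm rp : Set E3R), expNeg (ψ y)) *
            ENNReal.ofReal (4 * π * (2 * rp + 1) ^ 2 * (rp - rm) * ε) ^ m *
            nu ψ rm rp (n - (m + 1)) univ :=
        ENNReal.tsum_le_tsum fun g => (nu_chainSetAlong_le hψ g).trans (by gcongr)
    _ = _ := by
        rw [tsum_fintype, Finset.sum_const, Finset.card_univ, Fintype.card_embedding_eq,
          Fintype.card_fin, Fintype.card_fin, nsmul_eq_mul]

lemma tsum_nu_chainSet_le (hψ : Measurable ψ) (hrm : 0 ≤ rm) (hε0 : 0 ≤ ε) (hε1 : ε ≤ 1)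
    (m : ℕ) :
    ∑' n, (n ! : ℝ≥0∞)⁻¹ * nu ψ rm rp n (chainSet (m + 1) n ε) ≤
      (∫⁻ y in (univ ×ˢ Icc rm rp : Set E3R), expNeg (ψ y)) *
        ENNReal.ofReal (4 * π * (2 * rp + 1) ^ 2 * (rp - rm) * ε) ^ m *
        ∑' n, (n ! : ℝ≥0∞)⁻¹ * nu ψ rm rp n univ := by
  set C := (∫⁻ y in (univ ×ˢ Icc rm rp : Set E3R), expNeg (ψ y)) *
    ENNReal.ofReal (4 * π * (2 * rp + 1) ^ 2 * (rp - rm) * ε) ^ m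
  calc ∑' n, (n ! : ℝ≥0∞)⁻¹ * nu ψ rm rp n (chainSet (m + 1) n ε)
      ≤ ∑' n, (n ! : ℝ≥0∞)⁻¹ * (n.descFactorial (m + 1) * (C * nu ψ rm rp (n - (m + 1)) univ)) :=
        ENNReal.tsum_le_tsum fun n => by gcongr; exact nu_chainSet_le hψ hrm hε0 hε1 m n
    _ = ∑' n, (n ! : ℝ≥0∞)⁻¹ * (C * nu ψ rm rp n univ) :=
        tsum_inv_factorial_mul_descFactorial (m + 1) fun k => C * nu ψ rm rp k univ
    _ = C * ∑' n, (n ! : ℝ≥0∞)⁻¹ * nu ψ rm rp n univ := by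
        rw [← ENNReal.tsum_mul_left]
        exact tsum_congr fun n => mul_left_comm _ _ _

end ChainBound

theorem statement12_general (M : ℕ) (hM : 2 ≤ M) (rm rp : ℝ)
    (hrm : 0 < rm) (ε : ℝ) (hε0 : 0 < ε) (hε1 : ε ≤ 1)
    (ψ : E3R → ℝ≥0∞) (hψ : Measurable ψ) :
    (∑' n : ℕ, (n.factorial : ℝ≥0∞)⁻¹ * nu ψ rm rp n (chainSet M n ε)) ≤
      (∫⁻ y in (Set.univ ×ˢ Set.Icc rm rp : Set E3R), expNeg (ψ y)) *
        ENNReal.ofReal (4 * Real.pi * (2 * rp + 1) ^ 2 * (rp - rm) * ε) ^ (M - 1) *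
        (∑' m : ℕ, (m.factorial : ℝ≥0∞)⁻¹ * nu ψ rm rp m Set.univ) ∧
    (∑' n : ℕ, (n.factorial : ℝ≥0∞)⁻¹ * nu ψ rm rp n (chainSet M n ε)) /
        (∑' m : ℕ, (m.factorial : ℝ≥0∞)⁻¹ * nu ψ rm rp m Set.univ) ≤
      (∫⁻ y in (Set.univ ×ˢ Set.Icc rm rp : Set E3R), expNeg (ψ y)) *
        ENNReal.ofReal (4 * Real.pi * (2 * rp + 1) ^ 2 * (rp - rm)) ^ (M - 1) *
        ENNReal.ofReal ε ^ (M - 1) := by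
  obtain ⟨m, rfl⟩ : ∃ m, M = m + 1 := ⟨M - 1, by omega⟩
  rw [Nat.add_sub_cancel]
  have hchain := tsum_nu_chainSet_le (rp := rp) hψ hrm.le hε0.le hε1 m
  refine ⟨hchain, ENNReal.div_le_of_le_mul ?_⟩
  rwa [mul_assoc _ (_ ^ m) (_ ^ m), ← mul_pow, ← ENNReal.ofReal_mul' hε0.le]

/-- summing the chain estimate over `n` (note `chainSet M n ε = ∅` when
`n < M` since there is no injection `Fin M → Fin n`), and the resulting bound for the
probability of an `ε`-chain under the normalized Poisson mixture of the `ν_n`. -/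
theorem statement12 (M : ℕ) (hM : 2 ≤ M) (rm rp : ℝ)
    (hrm : 0 < rm) (hrmp : rm < rp) (ε : ℝ) (hε0 : 0 < ε) (hε1 : ε ≤ 1)
    (ψ : E3R → ℝ≥0∞) (hψ : Measurable ψ) :
    (∑' n : ℕ, (n.factorial : ℝ≥0∞)⁻¹ * nu ψ rm rp n (chainSet M n ε)) ≤
      (∫⁻ y in (Set.univ ×ˢ Set.Icc rm rp : Set E3R), expNeg (ψ y)) *
        ENNReal.ofReal (4 * Real.pi * (2 * rp + 1) ^ 2 * (rp - rm) * ε) ^ (M - 1) *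
        (∑' m : ℕ, (m.factorial : ℝ≥0∞)⁻¹ * nu ψ rm rp m Set.univ) ∧
    (∑' n : ℕ, (n.factorial : ℝ≥0∞)⁻¹ * nu ψ rm rp n (chainSet M n ε)) /
        (∑' m : ℕ, (m.factorial : ℝ≥0∞)⁻¹ * nu ψ rm rp m Set.univ) ≤
      (∫⁻ y in (Set.univ ×ˢ Set.Icc rm rp : Set E3R), expNeg (ψ y)) *
        ENNReal.ofReal (4 * Real.pi * (2 * rp + 1) ^ 2 * (rp - rm)) ^ (M - 1) *
        ENNReal.ofReal ε ^ (M - 1) :=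
  statement12_general M hM rm rp hrm ε hε0 hε1 ψ hψ
end
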